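/- Under the su(N) generator hypotheses, define the symmetric constants d a b c := 2·trace ((T a * T b + T b * T a) * T c). Then for all i₁, i₂, i₃, j₁, j₂, j₃ ∈ Fin N: Σ_{a,b,c : Fin (N^2 − 1)} d a b c · (T a) i₁ j₁ · (T b) i₂ j₂ · (T c) i₃ j₃ = (1/4)·(δ_{i₁ j₂}·δ_{i₂ j₃}·δ_{i₃ j₁} + δ_{i₁ j₃}·δ_{i₂ j₁}·δ_{i₃ j₂}) − (1/(2·N))·(δ_{i₁ j₁}·δ_{i₂ j₃}·δ_{i₃ j₂} + δ_{i₂ j₂}·δ_{i₁ j₃}·δ_{i₃ j₁} + δ_{i₃ j₃}·δ_{i₁ j₂}·δ_{i₂ j₁}) + (1/N^2)·δ_{i₁ j₁}·δ_{i₂ j₂}·δ_{i₃ j₃}, where δ is the Kronecker delta. -/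

import Mathlib

/-!
The orthogonality relations make the `T a`, together with `1`, a basis of all `N × N` matrices,
which yields the completeness relation `∑ a, tr (X T a) • T a = ½ (X - (tr X / N) • 1)`.
Reading the entry `(T a) i j` as `tr (E_{j i} T a)`, the contraction is a trilinear expression in
three elementary matrices `A, B, C`; the completeness relation, applied to each index, replaces
them by their traceless parts `Ã, B̃, C̃` and leaves `¼ tr ((Ã B̃ + B̃ Ã) C̃)`. Expanding this for
elementary matrices produces the Kronecker deltas.
-/

open Matrix

/-- The symmetric constants `d a b c = 2·Tr({T a, T b}·T c)`. -/
noncomputable def dConst {N : ℕ} (T : Fin (N ^ 2 - 1) → Matrix (Fin N) (Fin N) ℂ)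
    (a b c : Fin (N ^ 2 - 1)) : ℂ :=
  2 * ((T a * T b + T b * T a) * T c).trace

namespace Matrix

section CommSemiring

variable {R n : Type*} [CommSemiring R] [Fintype n]

theorem trace_sum_smul_mul_sum_smul_mul_sum_smul {ι : Type*} [Fintype ι] (x y z : ι → R)
    (U V W : ι → Matrix n n R) :
    ((∑ a, x a • U a) * (∑ b, y b • V b) * ∑ c, z c • W c).trace =
      ∑ a, ∑ b, ∑ c, x a * y b * z c * (U a * V b * W c).trace := by
  rw [Finset.sum_mul_sum]
  simp only [Finset.sum_mul]
  simp only [Finset.mul_sum, smul_mul_smul_comm, trace_sum, trace_smul, smul_eq_mul]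

variable [DecidableEq n]

theorem trace_single_one (i j : n) :
    (single j i (1 : R)).trace = if i = j then 1 else 0 := by
  by_cases h : i = j
  · simp [h]
  · simp [h, Ne.symm h]

theorem trace_single_one_mul_single_one (i₁ j₁ i₂ j₂ : n) :
    (single j₁ i₁ (1 : R) * single j₂ i₂ 1).trace =
      (if i₁ = j₂ then 1 else 0) * (if i₂ = j₁ then 1 else 0) := by
  simp only [trace_single_mul, single_apply, one_smul, ite_zero_mul_ite_zero, mul_one, eq_comm]

theorem trace_single_one_mul_single_one_mul_single_one (i₁ j₁ i₂ j₂ i₃ j₃ : n) :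
    (single j₁ i₁ (1 : R) * single j₂ i₂ 1 * single j₃ i₃ 1).trace =
      (if i₁ = j₂ then 1 else 0) * (if i₂ = j₃ then 1 else 0) * (if i₃ = j₁ then 1 else 0) := by
  rw [Matrix.mul_assoc]
  by_cases h : i₂ = j₃
  · rw [h, single_mul_single_same, one_mul, trace_single_one_mul_single_one]
    simp
  · simp [single_mul_single_of_ne _ _ _ _ h, h]

end CommSemiring

variable {K n ι : Type*} [Field K] [Fintype n] [DecidableEq n]

noncomputable def tracelessPart : Matrix n n K →ₗ[K] Matrix n n K :=
  LinearMap.id - (Fintype.card n : K)⁻¹ • (traceLinearMap n K K).smulRight 1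

theorem tracelessPart_apply (X : Matrix n n K) :
    tracelessPart X = X - (X.trace / Fintype.card n) • 1 := by
  simp [tracelessPart, div_eq_inv_mul, smul_smul]

theorem trace_anticomm_tracelessPart_mul (A B C : Matrix n n K) :
    ((tracelessPart A * tracelessPart B + tracelessPart B * tracelessPart A) *
        tracelessPart C).trace =
      (A * B * C).trace + (B * A * C).trace
        - 2 / Fintype.card n * (A.trace * (B * C).trace + B.trace * (A * C).trace
            + C.trace * (A * B).trace)
        + 4 / (Fintype.card n : K) ^ 2 * (A.trace * B.trace * C.trace) := by
  by_cases hN : (Fintype.card n : K) = 0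
  · simp [tracelessPart_apply, hN, Matrix.add_mul]
  simp only [tracelessPart_apply, mul_sub, sub_mul, Matrix.add_mul, smul_mul_assoc, mul_smul_comm,
    Matrix.one_mul, Matrix.mul_one, smul_add, trace_sub, trace_add, trace_smul, smul_eq_mul,
    trace_one, trace_mul_comm B A]
  field_simp
  ring

variable [Fintype ι] [DecidableEq ι]

structure IsTracelessOrthogonal (T : ι → Matrix n n K) : Prop where
  trace_eq_zero : ∀ a, (T a).trace = 0
  trace_mul : ∀ a b, (T a * T b).trace = if a = b then 1 / 2 else 0

namespace IsTracelessOrthogonal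

variable [CharZero K] {T : ι → Matrix n n K}

theorem linearIndependent_sumElim_one [Nonempty n] (hT : IsTracelessOrthogonal T) :
    LinearIndependent K (Sum.elim T fun _ : Unit => (1 : Matrix n n K)) := by
  rw [Fintype.linearIndependent_iff]
  intro g hg
  simp only [Fintype.sum_sum_type, Sum.elim_inl, Sum.elim_inr, Finset.univ_unique,
    Finset.sum_singleton] at hg
  have hscalar : g (.inr ()) = 0 := by
    simpa [trace_sum, hT.trace_eq_zero] using congrArg trace hg
  have hcoeff (b : ι) : g (.inl b) = 0 := by
    simpa [Matrix.sum_mul, trace_sum, hscalar, hT.trace_mul] using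
      congrArg (fun M => (M * T b).trace) hg
  rintro (b | ⟨⟩)
  exacts [hcoeff b, hscalar]

theorem span_sumElim_one_eq_top (hT : IsTracelessOrthogonal T)
    (hcard : Fintype.card ι + 1 = Fintype.card n ^ 2) :
    Submodule.span K (Set.range (Sum.elim T fun _ : Unit => (1 : Matrix n n K))) = ⊤ := by
  have : Nonempty n := Fintype.card_pos_iff.mp (Nat.pos_of_ne_zero fun h => by simp [h] at hcard)
  refine hT.linearIndependent_sumElim_one.span_eq_top_of_card_eq_finrank ?_
  simp [Module.finrank_matrix, hcard, sq]

theorem sum_trace_mul_smul (hT : IsTracelessOrthogonal T)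
    (hcard : Fintype.card ι + 1 = Fintype.card n ^ 2) (X : Matrix n n K) :
    ∑ a, (X * T a).trace • T a = (1 / 2 : K) • tracelessPart X := by
  have : Nonempty n := Fintype.card_pos_iff.mp (Nat.pos_of_ne_zero fun h => by simp [h] at hcard)
  let expansion : Matrix n n K →ₗ[K] Matrix n n K :=
    ∑ a, (traceLinearMap n K K ∘ₗ LinearMap.mulRight K (T a)).smulRight (T a)
  suffices expansion = (1 / 2 : K) • tracelessPart by
    simpa [expansion] using LinearMap.congr_fun this X
  refine LinearMap.ext_on_range (hT.span_sumElim_one_eq_top hcard) ?_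
  rintro (b | ⟨⟩)
  · simp [expansion, tracelessPart_apply, hT.trace_mul, hT.trace_eq_zero]
  · simp [expansion, tracelessPart_apply, hT.trace_eq_zero]

theorem sum_d_mul_trace_mul (hT : IsTracelessOrthogonal T)
    (hcard : Fintype.card ι + 1 = Fintype.card n ^ 2) (A B C : Matrix n n K) :
    ∑ a, ∑ b, ∑ c, 2 * ((T a * T b + T b * T a) * T c).trace *
        (A * T a).trace * (B * T b).trace * (C * T c).trace =
      1 / 4 * ((tracelessPart A * tracelessPart B + tracelessPart B * tracelessPart A) *
        tracelessPart C).trace := by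
  have contract (X Y : Matrix n n K) :
      ∑ a, ∑ b, ∑ c, (X * T a).trace * (Y * T b).trace * (C * T c).trace *
          (T a * T b * T c).trace =
        ((1 / 2 : K) • tracelessPart X * (1 / 2 : K) • tracelessPart Y *
          (1 / 2 : K) • tracelessPart C).trace := by
    simp only [← hT.sum_trace_mul_smul hcard, trace_sum_smul_mul_sum_smul_mul_sum_smul]
  have contract_swap := contract B A
  rw [Finset.sum_comm] at contract_swap
  calc _ = 2 * ∑ a, ∑ b, ∑ c,
          ((A * T a).trace * (B * T b).trace * (C * T c).trace * (T a * T b * T c).trace +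
            (B * T b).trace * (A * T a).trace * (C * T c).trace * (T b * T a * T c).trace) := by
        simp only [Finset.mul_sum]
        refine Finset.sum_congr rfl fun a _ => Finset.sum_congr rfl fun b _ =>
          Finset.sum_congr rfl fun c _ => ?_
        rw [Matrix.add_mul, trace_add]
        ring
    _ = _ := by
        simp only [Finset.sum_add_distrib, contract, contract_swap, smul_mul_smul_comm,
          trace_smul, Matrix.add_mul, trace_add, smul_eq_mul]
        ring

end IsTracelessOrthogonal

end Matrix

theorem suN_d_contraction_general (N : ℕ)
    (T : Fin (N ^ 2 - 1) → Matrix (Fin N) (Fin N) ℂ)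
    (htr : ∀ a, (T a).trace = 0)
    (horth : ∀ a b, (T a * T b).trace = if a = b then (1 / 2 : ℂ) else 0)
    (i₁ i₂ i₃ j₁ j₂ j₃ : Fin N) :
    ∑ a, ∑ b, ∑ c, dConst T a b c * T a i₁ j₁ * T b i₂ j₂ * T c i₃ j₃ =
      (1 / 4 : ℂ) *
          ((if i₁ = j₂ then 1 else 0) * (if i₂ = j₃ then 1 else 0) * (if i₃ = j₁ then 1 else 0)
            + (if i₁ = j₃ then 1 else 0) * (if i₂ = j₁ then 1 else 0) *
                (if i₃ = j₂ then 1 else 0))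
        - (1 / (2 * (N : ℂ))) *
            ((if i₁ = j₁ then 1 else 0) * (if i₂ = j₃ then 1 else 0) * (if i₃ = j₂ then 1 else 0)
              + (if i₂ = j₂ then 1 else 0) * (if i₁ = j₃ then 1 else 0) *
                  (if i₃ = j₁ then 1 else 0)
              + (if i₃ = j₃ then 1 else 0) * (if i₁ = j₂ then 1 else 0) *
                  (if i₂ = j₁ then 1 else 0))
        + (1 / (N : ℂ) ^ 2) *
            ((if i₁ = j₁ then 1 else 0) * (if i₂ = j₂ then 1 else 0) *
              (if i₃ = j₃ then 1 else 0)) := by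
  have hT : IsTracelessOrthogonal T := ⟨htr, horth⟩
  have hcard : Fintype.card (Fin (N ^ 2 - 1)) + 1 = Fintype.card (Fin N) ^ 2 := by
    simpa using Nat.sub_add_cancel (Nat.one_le_pow 2 N i₁.pos)
  have h := hT.sum_d_mul_trace_mul hcard (single j₁ i₁ 1) (single j₂ i₂ 1) (single j₃ i₃ 1)
  simp only [trace_single_mul, one_smul] at h
  simp only [dConst, h, trace_anticomm_tracelessPart_mul, trace_single_one,
    trace_single_one_mul_single_one, trace_single_one_mul_single_one_mul_single_one,
    Fintype.card_fin]
  ring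

/-- **Contraction of three su(N) generators with the symmetric constants d.** -/
theorem suN_d_contraction (N : ℕ) (hN : 2 ≤ N)
    (T : Fin (N ^ 2 - 1) → Matrix (Fin N) (Fin N) ℂ)
    (htr : ∀ a, (T a).trace = 0)
    (hherm : ∀ a, (T a)ᴴ = T a)
    (horth : ∀ a b, (T a * T b).trace = if a = b then (1 / 2 : ℂ) else 0)
    (i₁ i₂ i₃ j₁ j₂ j₃ : Fin N) :
    ∑ a, ∑ b, ∑ c, dConst T a b c * T a i₁ j₁ * T b i₂ j₂ * T c i₃ j₃ =
      (1 / 4 : ℂ) *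
          ((if i₁ = j₂ then 1 else 0) * (if i₂ = j₃ then 1 else 0) * (if i₃ = j₁ then 1 else 0)
            + (if i₁ = j₃ then 1 else 0) * (if i₂ = j₁ then 1 else 0) *
                (if i₃ = j₂ then 1 else 0))
        - (1 / (2 * (N : ℂ))) *
            ((if i₁ = j₁ then 1 else 0) * (if i₂ = j₃ then 1 else 0) * (if i₃ = j₂ then 1 else 0)
              + (if i₂ = j₂ then 1 else 0) * (if i₁ = j₃ then 1 else 0) *
                  (if i₃ = j₁ then 1 else 0)
              + (if i₃ = j₃ then 1 else 0) * (if i₁ = j₂ then 1 else 0) *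
                  (if i₂ = j₁ then 1 else 0))
        + (1 / (N : ℂ) ^ 2) *
            ((if i₁ = j₁ then 1 else 0) * (if i₂ = j₂ then 1 else 0) *
              (if i₃ = j₃ then 1 else 0)) :=
  suN_d_contraction_general N T htr horth i₁ i₂ i₃ j₁ j₂ j₃
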